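/- (Dimension 80 case of the main theorem.) Define P₈₀(z) = (1 − z)¹⁰ − (75/8)(1 − z)⁷ z² + (42525/2048)(1 − z)⁴ z⁴ − (202125/32768)(1 − z) z⁶. For every real y > 0, P₈₀(z(y)) ≥ P₈₀(1/4) > 0; consequently the secrecy function Ξ(y) = P₈₀(z(y))^{-1} of the extremal even unimodular lattice in dimension 80 satisfies Ξ(y) ≤ Ξ(1) = P₈₀(1/4)^{-1}. -/

import Mathlib

/-- Jacobi theta constant θ₂ on the imaginary axis. -/
noncomputable def theta2 (y : ℝ) : ℝ := ∑' n : ℤ, Real.exp (-Real.pi * y * (n + 1/2)^2)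

/-- Jacobi theta constant θ₃ on the imaginary axis. -/
noncomputable def theta3 (y : ℝ) : ℝ := ∑' n : ℤ, Real.exp (-Real.pi * y * n^2)

/-- Jacobi theta constant θ₄ on the imaginary axis. -/
noncomputable def theta4 (y : ℝ) : ℝ := ∑' n : ℤ, (-1 : ℝ)^n * Real.exp (-Real.pi * y * n^2)

/-- The function z(y) = θ₂(y)⁴θ₄(y)⁴/θ₃(y)⁸. -/
noncomputable def zfun (y : ℝ) : ℝ := theta2 y ^ 4 * theta4 y ^ 4 / theta3 y ^ 8

/-- Denominator polynomial of the secrecy function of the extremal even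
unimodular lattice in dimension 80. -/
noncomputable def P80 (z : ℝ) : ℝ := (1 - z) ^ 10 - 75 / 8 * (1 - z) ^ 7 * z ^ 2 + 42525 / 2048 * (1 - z) ^ 4 * z ^ 4 - 202125 / 32768 * (1 - z) * z ^ 6

/-!
Splitting `ℤ²` into the two cosets of `{(m, n) | m + n even}` gives the duplication formulas
`θ₃(y)² = θ₃(2y)² + θ₂(2y)²`, `θ₄(y)² = θ₃(2y)² - θ₂(2y)²`, `θ₂(y)² = 2 θ₂(2y) θ₃(2y)`, and hence
Jacobi's identity `θ₂⁴ + θ₄⁴ = θ₃⁴`. Thus `z = ab / (a + b)²` with `a = θ₂⁴ ≥ 0`, `b = θ₄⁴ ≥ 0`,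
so `0 ≤ z ≤ 1/4`, with equality at `y = 1`, the fixed point of the transformation `y ↦ 1/y` that
exchanges `θ₂` and `θ₄`. It remains to check that `P₈₀ ≥ P₈₀(1/4) > 0` on `[0, 1/4]`.
-/

open Real HurwitzZeta

theorem HasSum.add_of_parity {α : Type*} [AddCommMonoid α] [TopologicalSpace α] [ContinuousAdd α]
    {F : ℤ × ℤ → α} {a b : α}
    (ha : HasSum (fun p : ℤ × ℤ => F (p.1 + p.2, p.1 - p.2)) a)
    (hb : HasSum (fun p : ℤ × ℤ => F (p.1 + p.2 + 1, p.1 - p.2)) b) : HasSum F (a + b) := by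
  let e : ℤ × ℤ → ℤ × ℤ := fun p => (p.1 + p.2, p.1 - p.2)
  let o : ℤ × ℤ → ℤ × ℤ := fun p => (p.1 + p.2 + 1, p.1 - p.2)
  have he : e.Injective := by
    rintro ⟨u, v⟩ ⟨u', v'⟩ h
    simp only [e, Prod.ext_iff] at h ⊢
    omega
  have ho : o.Injective := by
    rintro ⟨u, v⟩ ⟨u', v'⟩ h
    simp only [o, Prod.ext_iff] at h ⊢
    omega
  have hrange : Set.range o = (Set.range e)ᶜ := by
    ext ⟨m, n⟩
    simp only [Set.mem_range, Set.mem_compl_iff, e, o, Prod.ext_iff, Prod.exists, not_exists]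
    constructor
    · rintro ⟨u, v, h₁, h₂⟩ u' v' ⟨h₃, h₄⟩
      omega
    · intro h
      by_cases hmn : (m + n) % 2 = 0
      · exact absurd ⟨by omega, by omega⟩ (h ((m + n) / 2) ((m - n) / 2))
      · exact ⟨(m + n - 1) / 2, (m - n - 1) / 2, by omega, by omega⟩
  exact (he.hasSum_range_iff.mpr ha).add_isCompl (hrange ▸ isCompl_compl)
    (ho.hasSum_range_iff.mpr hb)

theorem mul_eq_of_hasSum_parity {f g a b c d : ℤ → ℝ} {F G A B C D : ℝ}
    (hf : HasSum f F) (hg : HasSum g G) (ha : HasSum a A) (hb : HasSum b B)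
    (hc : HasSum c C) (hd : HasSum d D)
    (h₀ : ∀ u v, f (u + v) * g (u - v) = a u * b v)
    (h₁ : ∀ u v, f (u + v + 1) * g (u - v) = c u * d v) :
    F * G = A * B + C * D := by
  have hprod {f g : ℤ → ℝ} {F G : ℝ} (hf : HasSum f F) (hg : HasSum g G) :
      HasSum (fun p : ℤ × ℤ => f p.1 * g p.2) (F * G) :=
    hf.mul hg (summable_mul_of_summable_norm hf.summable.abs hg.summable.abs)
  refine (hprod hf hg).unique (HasSum.add_of_parity ?_ ?_)
  · simpa only [h₀] using hprod ha hb
  · simpa only [h₁] using hprod hc hd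

namespace HurwitzZeta

theorem hasSum_exp_neg_mul_add_sq (a : ℝ) {y : ℝ} (hy : 0 < y) :
    HasSum (fun n : ℤ => exp (-π * y * (n + a) ^ 2)) (evenKernel a y) := by
  simpa only [mul_right_comm _ y] using hasSum_int_evenKernel a hy

theorem evenKernel_mul_evenKernel (a b : ℝ) {y : ℝ} (hy : 0 < y) :
    evenKernel a y * evenKernel b y =
      evenKernel ((a + b) / 2 : ℝ) (2 * y) * evenKernel ((a - b) / 2 : ℝ) (2 * y) +
        evenKernel ((a + b + 1) / 2 : ℝ) (2 * y) * evenKernel ((a - b + 1) / 2 : ℝ) (2 * y) := by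
  have hy₂ : 0 < 2 * y := by positivity
  refine mul_eq_of_hasSum_parity (hasSum_exp_neg_mul_add_sq a hy) (hasSum_exp_neg_mul_add_sq b hy)
    (hasSum_exp_neg_mul_add_sq _ hy₂) (hasSum_exp_neg_mul_add_sq _ hy₂)
    (hasSum_exp_neg_mul_add_sq _ hy₂) (hasSum_exp_neg_mul_add_sq _ hy₂) ?_ ?_ <;>
  · intro u v
    rw [← exp_add, ← exp_add]
    push_cast
    ring_nf

theorem evenKernel_one : evenKernel ((1 : ℝ) : UnitAddCircle) = evenKernel 0 := by
  rw [AddCircle.coe_period]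

end HurwitzZeta

theorem hasSum_theta3_evenKernel {y : ℝ} (hy : 0 < y) :
    HasSum (fun n : ℤ => exp (-π * y * n ^ 2)) (evenKernel 0 y) := by
  simpa using hasSum_exp_neg_mul_add_sq 0 hy

theorem hasSum_theta4_cosKernel {y : ℝ} (hy : 0 < y) :
    HasSum (fun n : ℤ => (-1 : ℝ) ^ n * exp (-π * y * n ^ 2)) (cosKernel (1 / 2 : ℝ) y) := by
  rw [← Complex.hasSum_ofReal]
  convert hasSum_int_cosKernel (1 / 2) hy using 2 with n
  have hsign : Complex.exp (2 * π * Complex.I * (1 / 2) * n) = (-1) ^ n := by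
    rw [← Complex.exp_pi_mul_I, ← Complex.exp_int_mul]
    ring_nf
  push_cast
  rw [hsign, mul_right_comm _ (y : ℂ)]

theorem theta2_eq_evenKernel {y : ℝ} (hy : 0 < y) : theta2 y = evenKernel (1 / 2 : ℝ) y :=
  (hasSum_exp_neg_mul_add_sq _ hy).tsum_eq

theorem theta3_eq_evenKernel {y : ℝ} (hy : 0 < y) : theta3 y = evenKernel 0 y :=
  (hasSum_theta3_evenKernel hy).tsum_eq

theorem theta4_eq_cosKernel {y : ℝ} (hy : 0 < y) : theta4 y = cosKernel (1 / 2 : ℝ) y :=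
  (hasSum_theta4_cosKernel hy).tsum_eq

theorem theta3_sq {y : ℝ} (hy : 0 < y) :
    theta3 y ^ 2 = theta3 (2 * y) ^ 2 + theta2 (2 * y) ^ 2 := by
  have hy₂ : 0 < 2 * y := by positivity
  have hdup := evenKernel_mul_evenKernel 0 0 hy
  norm_num at hdup
  rw [theta3_eq_evenKernel hy, theta3_eq_evenKernel hy₂, theta2_eq_evenKernel hy₂, sq, hdup]
  ring

theorem theta2_sq {y : ℝ} (hy : 0 < y) : theta2 y ^ 2 = 2 * theta2 (2 * y) * theta3 (2 * y) := by
  have hy₂ : 0 < 2 * y := by positivity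
  have hdup := evenKernel_mul_evenKernel (1 / 2) (1 / 2) hy
  norm_num [evenKernel_one] at hdup
  rw [theta2_eq_evenKernel hy, theta2_eq_evenKernel hy₂, theta3_eq_evenKernel hy₂, sq, hdup]
  ring

theorem theta4_sq {y : ℝ} (hy : 0 < y) :
    theta4 y ^ 2 = theta3 (2 * y) ^ 2 - theta2 (2 * y) ^ 2 := by
  have hy₂ : 0 < 2 * y := by positivity
  rw [theta4_eq_cosKernel hy, theta3_eq_evenKernel hy₂, theta2_eq_evenKernel hy₂, sq, sq, sq,
    sub_eq_add_neg, ← mul_neg]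
  have hθ₂ := hasSum_exp_neg_mul_add_sq (1 / 2) hy₂
  refine mul_eq_of_hasSum_parity (hasSum_theta4_cosKernel hy) (hasSum_theta4_cosKernel hy)
    (hasSum_theta3_evenKernel hy₂) (hasSum_theta3_evenKernel hy₂) hθ₂ hθ₂.neg ?_ ?_
  · intro u v
    have hsign : (-1 : ℝ) ^ (u + v) * (-1) ^ (u - v) = 1 := by
      rw [← zpow_add₀ (by norm_num)]
      exact Even.neg_one_zpow ⟨u, by ring⟩
    rw [mul_mul_mul_comm, hsign, one_mul, ← exp_add, ← exp_add]
    push_cast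
    ring_nf
  · intro u v
    have hsign : (-1 : ℝ) ^ (u + v + 1) * (-1) ^ (u - v) = -1 := by
      rw [← zpow_add₀ (by norm_num)]
      exact Odd.neg_one_zpow ⟨u, by ring⟩
    rw [mul_mul_mul_comm, hsign, neg_one_mul, mul_neg, ← exp_add, ← exp_add]
    push_cast
    ring_nf

theorem theta2_pow_four_add_theta4_pow_four {y : ℝ} (hy : 0 < y) :
    theta2 y ^ 4 + theta4 y ^ 4 = theta3 y ^ 4 := by
  calc theta2 y ^ 4 + theta4 y ^ 4 = (theta2 y ^ 2) ^ 2 + (theta4 y ^ 2) ^ 2 := by ring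
    _ = (theta3 y ^ 2) ^ 2 := by rw [theta2_sq hy, theta3_sq hy, theta4_sq hy]; ring
    _ = theta3 y ^ 4 := by ring

theorem theta2_one_eq_theta4_one : theta2 1 = theta4 1 := by
  rw [theta2_eq_evenKernel one_pos, theta4_eq_cosKernel one_pos, evenKernel_functional_equation]
  norm_num

theorem theta3_pos {y : ℝ} (hy : 0 < y) : 0 < theta3 y :=
  (hasSum_theta3_evenKernel hy).summable.tsum_pos (fun _ => (exp_pos _).le) 0 (exp_pos _)

theorem zfun_nonneg (y : ℝ) : 0 ≤ zfun y := by
  rw [zfun]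
  positivity

theorem zfun_le_quarter {y : ℝ} (hy : 0 < y) : zfun y ≤ 1 / 4 := by
  have hjacobi := theta2_pow_four_add_theta4_pow_four hy
  have hθ₃ := theta3_pos hy
  rw [zfun, div_le_iff₀ (by positivity), show theta3 y ^ 8 = (theta3 y ^ 4) ^ 2 by ring,
    ← hjacobi]
  nlinarith [sq_nonneg (theta2 y ^ 4 - theta4 y ^ 4)]

theorem zfun_one : zfun 1 = 1 / 4 := by
  have hjacobi := theta2_pow_four_add_theta4_pow_four one_pos
  have hθ₃ := theta3_pos one_pos
  rw [theta2_one_eq_theta4_one] at hjacobi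
  rw [zfun, theta2_one_eq_theta4_one, div_eq_iff (by positivity)]
  linear_combination ((theta3 1 ^ 4 + 2 * theta4 1 ^ 4) / 4) * hjacobi

theorem P80_quarter_le {z : ℝ} (h₀ : 0 ≤ z) (h₁ : z ≤ 1 / 4) : P80 (1 / 4) ≤ P80 z := by
  have hbern : ∀ k, 0 ≤ z ^ k * (1 / 4 - z) ^ (10 - k) := fun k => by
    have : 0 ≤ 1 / 4 - z := by linarith
    positivity
  unfold P80
  -- `P80 z - P80 (1/4)` has nonnegative coefficients in the Bernstein basis of `[0, 1/4]`
  linarith [hbern 0, hbern 1, hbern 2, hbern 3, hbern 4, hbern 5, hbern 6, hbern 7, hbern 8,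
    hbern 9]

theorem P80_quarter_pos : 0 < P80 (1 / 4) := by
  norm_num [P80]

theorem secrecy_dim80 :
    (∀ y : ℝ, 0 < y → P80 (1 / 4) ≤ P80 (zfun y)) ∧ 0 < P80 (1 / 4) ∧
      (∀ y : ℝ, 0 < y → (P80 (zfun y))⁻¹ ≤ (P80 (zfun 1))⁻¹) ∧
      (P80 (zfun 1))⁻¹ = (P80 (1 / 4))⁻¹ := by
  have hbound : ∀ y : ℝ, 0 < y → P80 (1 / 4) ≤ P80 (zfun y) := fun y hy =>
    P80_quarter_le (zfun_nonneg y) (zfun_le_quarter hy)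
  refine ⟨hbound, P80_quarter_pos, fun y hy => ?_, by rw [zfun_one]⟩
  rw [zfun_one]
  exact inv_anti₀ P80_quarter_pos (hbound y hy)
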